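/- Let s₀(k) = u_k(w) + w − 1 for w ∈ (0,1) fixed, where u_k is defined for all integers k by u₀(w) = w, u_{k+1}(w) = 2^{u_k(w)} − 1, u_{k−1}(w) = log₂(u_k(w)+1). Then k ↦ s₀(k) is strictly decreasing on ℤ, lim_{k→−∞} s₀(k) = w > 0, and lim_{k→+∞} s₀(k) = w − 1 < 0; hence there is a unique integer n₀ with s₀(k) > 0 for k < n₀ and s₀(k) ≤ 0 for k ≥ n₀. -/

import Mathlib

/-!
By strict convexity (Bernoulli's inequality) `0 < 2 ^ x - 1 < x` on `(0, 1)`, and the map is an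
increasing bijection of `[0, 1]`, so the whole bi-infinite orbit `u_k(w)` stays in `(0, 1)` and is
strictly decreasing. Its limits at `±∞` are fixed points, hence `0` at `+∞` and `1` at `-∞`.
A strictly decreasing sequence that is positive somewhere and nonpositive somewhere crosses zero
at exactly one index.
-/

open Filter Set Topology Function

lemma two_rpow_sub_one_lt_self {x : ℝ} (hx : x ∈ Ioo (0 : ℝ) 1) : (2 : ℝ) ^ x - 1 < x := by
  have h : (2 : ℝ) ^ x < 1 + x := by
    simpa [one_add_one_eq_two] using
      rpow_one_add_lt_one_add_mul_self (s := 1) (by norm_num) one_ne_zero hx.1 hx.2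
  linarith

lemma two_rpow_sub_one_mem_Ioo_iff {x : ℝ} :
    (2 : ℝ) ^ x - 1 ∈ Ioo (0 : ℝ) 1 ↔ x ∈ Ioo (0 : ℝ) 1 := by
  have hpos : 0 < (2 : ℝ) ^ x - 1 ↔ 0 < x := by
    rw [sub_pos, Real.one_lt_rpow_iff_of_pos two_pos]
    simp
  have hlt : (2 : ℝ) ^ x - 1 < 1 ↔ x < 1 := by
    rw [sub_lt_iff_lt_add, one_add_one_eq_two]
    simpa using (Real.rpow_lt_rpow_left_iff one_lt_two : (2 : ℝ) ^ x < 2 ^ (1 : ℝ) ↔ _)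
  simp only [mem_Ioo, hpos, hlt]

lemma continuous_two_rpow_sub_one : Continuous fun x : ℝ => (2 : ℝ) ^ x - 1 :=
  (continuous_const.rpow continuous_id fun _ => Or.inl two_ne_zero).sub continuous_const

lemma isFixedPt_of_tendsto_int_orbit {X : Type*} [TopologicalSpace X] [T2Space X] {f : X → X}
    {v : ℤ → X} {l : Filter ℤ} [l.NeBot] (hl : Tendsto (· + 1) l l)
    (hv : ∀ k, v (k + 1) = f (v k)) {x : X} (hf : ContinuousAt f x) (h : Tendsto v l (𝓝 x)) :
    IsFixedPt f x := by
  refine tendsto_nhds_unique (hf.tendsto.comp h) ?_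
  simpa only [comp_def, hv] using h.comp hl

lemma Antitone.existsUnique_crossing {α : Type*} [LinearOrder α] {s : ℤ → α} (hs : Antitone s)
    {c : α} (habove : ∃ k, c < s k) (hbelow : ∃ k, s k ≤ c) :
    ∃! n : ℤ, (∀ k < n, c < s k) ∧ ∀ k ≥ n, s k ≤ c := by
  obtain ⟨k₀, hk₀⟩ := habove
  have hbdd : ∃ b : ℤ, ∀ z, s z ≤ c → b ≤ z :=
    ⟨k₀, fun z hz => le_of_not_ge fun hzk => (hk₀.trans_le (hs hzk)).not_ge hz⟩
  obtain ⟨n, hn, hleast⟩ := Int.exists_least_of_bdd hbdd hbelow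
  refine ⟨n, ⟨fun k hk => lt_of_not_ge fun hsk => (hleast k hsk).not_gt hk,
    fun k hk => (hs hk).trans hn⟩, ?_⟩
  rintro m ⟨hm_above, hm_below⟩
  rcases lt_trichotomy m n with hmn | rfl | hnm
  · exact absurd (hleast m (hm_below m le_rfl)) hmn.not_ge
  · rfl
  · exact absurd hn (hm_above n hnm).not_ge

section Orbit

variable {v : ℤ → ℝ} (hv : ∀ k, v (k + 1) = (2 : ℝ) ^ v k - 1)
include hv

lemma orbit_mem_Ioo (h0 : v 0 ∈ Ioo (0 : ℝ) 1) (k : ℤ) : v k ∈ Ioo (0 : ℝ) 1 := by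
  induction k using Int.induction_on with
  | zero => exact h0
  | succ n ih => rwa [hv, two_rpow_sub_one_mem_Ioo_iff]
  | pred n ih => rwa [← two_rpow_sub_one_mem_Ioo_iff, ← hv, sub_add_cancel]

variable (h0 : v 0 ∈ Ioo (0 : ℝ) 1)
include h0

lemma orbit_strictAnti : StrictAnti v :=
  strictAnti_int_of_succ_lt fun k => hv k ▸ two_rpow_sub_one_lt_self (orbit_mem_Ioo hv h0 k)

lemma orbit_tendsto_atTop_zero : Tendsto v atTop (𝓝 0) := by
  have hbdd : BddBelow (range v) := ⟨0, forall_mem_range.2 fun k => (orbit_mem_Ioo hv h0 k).1.le⟩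
  have hlim := tendsto_atTop_ciInf (orbit_strictAnti hv h0).antitone hbdd
  have hfix := isFixedPt_of_tendsto_int_orbit (f := fun x => (2 : ℝ) ^ x - 1)
    (tendsto_atTop_add_const_right _ 1 tendsto_id) hv continuous_two_rpow_sub_one.continuousAt hlim
  have hnonneg : 0 ≤ ⨅ k, v k := le_ciInf fun k => (orbit_mem_Ioo hv h0 k).1.le
  have hlt_one : ⨅ k, v k < 1 := (ciInf_le hbdd 0).trans_lt h0.2
  obtain hzero | hpos := hnonneg.eq_or_lt
  · rwa [← hzero] at hlim
  · exact absurd hfix (two_rpow_sub_one_lt_self ⟨hpos, hlt_one⟩).ne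

lemma orbit_tendsto_atBot_one : Tendsto v atBot (𝓝 1) := by
  have hbdd : BddAbove (range v) := ⟨1, forall_mem_range.2 fun k => (orbit_mem_Ioo hv h0 k).2.le⟩
  have hlim := tendsto_atBot_ciSup (orbit_strictAnti hv h0).antitone hbdd
  have hfix := isFixedPt_of_tendsto_int_orbit (f := fun x => (2 : ℝ) ^ x - 1)
    (tendsto_atBot_add_const_right _ 1 tendsto_id) hv continuous_two_rpow_sub_one.continuousAt hlim
  have hle_one : ⨆ k, v k ≤ 1 := ciSup_le fun k => (orbit_mem_Ioo hv h0 k).2.le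
  have hpos : 0 < ⨆ k, v k := h0.1.trans_le (le_ciSup hbdd 0)
  obtain hone | hlt := hle_one.eq_or_lt
  · rwa [hone] at hlim
  · exact absurd hfix (two_rpow_sub_one_lt_self ⟨hpos, hlt⟩).ne

end Orbit

theorem stmt18 (u : ℤ → ℝ → ℝ)
    (h0 : ∀ t ∈ Set.Icc (0:ℝ) 1, u 0 t = t)
    (hrec : ∀ k : ℤ, ∀ t ∈ Set.Icc (0:ℝ) 1, u (k + 1) t = (2:ℝ) ^ (u k t) - 1)
    (w : ℝ) (hw : w ∈ Set.Ioo (0:ℝ) 1) :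
    StrictAnti (fun k : ℤ => u k w + w - 1) ∧
    Filter.Tendsto (fun k : ℤ => u k w + w - 1) Filter.atBot (nhds w) ∧
    0 < w ∧
    Filter.Tendsto (fun k : ℤ => u k w + w - 1) Filter.atTop (nhds (w - 1)) ∧
    w - 1 < 0 ∧
    ∃! n₀ : ℤ, (∀ k < n₀, 0 < u k w + w - 1) ∧ ∀ k ≥ n₀, u k w + w - 1 ≤ 0 := by
  have hwI : w ∈ Icc (0 : ℝ) 1 := Ioo_subset_Icc_self hw
  have hv : ∀ k, u (k + 1) w = (2 : ℝ) ^ u k w - 1 := fun k => hrec k w hwI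
  have hv0 : u 0 w ∈ Ioo (0 : ℝ) 1 := (h0 w hwI).symm ▸ hw
  have hanti : StrictAnti fun k => u k w + w - 1 :=
    fun a b hab => by simpa using orbit_strictAnti (v := (u · w)) hv hv0 hab
  have hbot : Tendsto (fun k => u k w + w - 1) atBot (𝓝 w) := by
    simpa using ((orbit_tendsto_atBot_one (v := (u · w)) hv hv0).add_const w).sub_const 1
  have htop : Tendsto (fun k => u k w + w - 1) atTop (𝓝 (w - 1)) := by
    simpa using ((orbit_tendsto_atTop_zero (v := (u · w)) hv hv0).add_const w).sub_const 1
  have hw1 : w - 1 < 0 := sub_neg.2 hw.2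
  refine ⟨hanti, hbot, hw.1, htop, hw1, hanti.antitone.existsUnique_crossing ?_ ?_⟩
  · exact (hbot.eventually_const_lt hw.1).exists
  · exact ((htop.eventually_lt_const hw1).exists).imp fun _ => le_of_lt
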